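/- arXiv:2302.00969 — 3 statements merged into one kernel-verified Lean document; each statement's English description precedes it below -/
import Mathlib

section
/- Let F be a universally complete Riesz space with weak order unit e taken as the algebraic unit of its f-algebra structure. The canonical partial inverse of any g in F (i.e., a partial inverse h of g lying in the band generated by |g|) is unique, and g is in turn the canonical partial inverse of h. Moreover, if g is positive then its canonical partial inverse is positive. -/
/-!
`F` is a universally complete Riesz space with weak order unit `e`, equipped with
its `f`-algebra structure in which `e = 1` is the multiplicative unit.
Universal completeness = Dedekind completeness (the lattice is conditionally
complete) together with lateral completeness.  The band projection `P_{|g|} e`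
of the weak order unit onto the band generated by `|g|` is computed by the
standard formula `P_{|g|} e = sup_n (n|g| ⊓ e)`.
-/

variable {F : Type*} [CommRing F] [ConditionallyCompleteLattice F]

/-- The element `P_{|g|} e`, where `P_{|g|}` is the band projection onto the band
generated by `|g|` and `e = 1` is the weak order unit. -/
def bandUnitPart (g : F) : F := ⨆ n : ℕ, ((n • |g|) ⊓ 1)

/-- A band: an order-closed solid subspace. -/
def IsBand (B : Set F) : Prop :=
  (0 ∈ B) ∧ (∀ x ∈ B, ∀ y ∈ B, x + y ∈ B) ∧ (∀ x ∈ B, ∀ y : F, |y| ≤ |x| → y ∈ B) ∧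
  (∀ S : Set F, S ⊆ B → ∀ a : F, IsLUB S a → a ∈ B)

/-- The band generated by `g`. -/
def bandGen (g : F) : Set F := ⋂₀ {B : Set F | IsBand B ∧ g ∈ B}

/-- `h` is the canonical partial inverse of `g`: a partial inverse
(`g h = h g = P_{|g|} e`) lying in the band generated by `|g|`. -/
def IsCanonPartialInverse (g h : F) : Prop :=
  h ∈ bandGen |g| ∧ g * h = bandUnitPart g ∧ h * g = bandUnitPart g

/-!
Everything rests on `P_{|g|} e` acting as the identity on the band generated by `|g|`: an element
`h` of that band is disjoint from `e - P_{|g|} e`, and in an `f`-algebra disjoint elements have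
zero product, so `(e - P_{|g|} e) h = 0`.

Uniqueness is then the usual computation `h₁ = P h₁ = h₂ g h₁ = h₂ P = h₂`.
For symmetry, `g = P g = h g²`, so `|g| ≤ |h| g²`; in an `f`-algebra `|h| c` lies in the band
generated by `|h|` for every `c ≥ 0` (it is the supremum of the `n|h| ⊓ |h| c`), so the bands of
`g` and `h` coincide and `P_{|h|} e = P_{|g|} e`.
For positivity, `g h⁺` and `g h⁻` are disjoint with `g h⁺ - g h⁻ = P ≥ 0`, hence `g h⁻ = 0` and
`h⁻ = P h⁻ = h g h⁻ = 0`.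
-/

theorem inf_eq_zero_of_le {α : Type*} [Lattice α] [Zero α] {a b c : α} (ha : 0 ≤ a) (hab : a ≤ b)
    (h : b ⊓ c = 0) : a ⊓ c = 0 :=
  le_antisymm ((inf_le_inf_right c hab).trans_eq h) (le_inf ha (h ▸ inf_le_right))

section LatticeOrderedGroup

variable {α : Type*} [AddCommGroup α] [Lattice α] [AddLeftMono α]

theorem add_inf_le_inf_add_inf {a b c : α} (ha : 0 ≤ a) (hb : 0 ≤ b) (hc : 0 ≤ c) :
    (a + b) ⊓ c ≤ a ⊓ c + b ⊓ c := by
  rw [add_inf, inf_add, inf_add]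
  exact le_inf (le_inf inf_le_left (inf_le_right.trans (le_add_of_nonneg_right hb)))
    (le_inf (inf_le_right.trans (le_add_of_nonneg_left ha))
      (inf_le_right.trans (le_add_of_nonneg_left hc)))

theorem nsmul_inf_eq_zero {a c : α} (h : a ⊓ c = 0) (n : ℕ) : (n • a) ⊓ c = 0 := by
  have ha : 0 ≤ a := h ▸ inf_le_left
  have hc : 0 ≤ c := h ▸ inf_le_right
  induction n with
  | zero => rw [zero_nsmul, inf_eq_left.2 hc]
  | succ n ih =>
    refine le_antisymm ?_ (le_inf (nsmul_nonneg ha _) hc)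
    calc ((n + 1) • a) ⊓ c = (n • a + a) ⊓ c := by rw [succ_nsmul]
      _ ≤ (n • a) ⊓ c + a ⊓ c := add_inf_le_inf_add_inf (nsmul_nonneg ha n) ha hc
      _ = 0 := by rw [ih, h, add_zero]

theorem posPart_le_abs (a : α) : a⁺ ≤ |a| := by
  rw [← posPart_add_negPart]
  exact le_add_of_nonneg_right (negPart_nonneg a)

theorem negPart_le_abs (a : α) : a⁻ ≤ |a| := by
  rw [← posPart_add_negPart]
  exact le_add_of_nonneg_left (posPart_nonneg a)

theorem inf_nonpos_iff_add_le_sup {a w : α} : a ⊓ w ≤ 0 ↔ a + w ≤ a ⊔ w := by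
  rw [← inf_add_sup a w, add_le_iff_nonpos_left]

theorem IsLUB.inf_nonpos {S : Set α} {a w : α} (ha : IsLUB S a)
    (hS : ∀ s ∈ S, s ⊓ w ≤ 0) : a ⊓ w ≤ 0 := by
  rw [inf_nonpos_iff_add_le_sup, ← le_sub_iff_add_le]
  refine ha.2 fun s hs => le_sub_iff_add_le.2 ?_
  exact (inf_nonpos_iff_add_le_sup.1 (hS s hs)).trans (sup_le_sup_right (ha.1 hs) w)

end LatticeOrderedGroup

section ConditionallyComplete

variable {α : Type*} [AddCommGroup α] [ConditionallyCompleteLattice α] [AddLeftMono α]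

theorem nonpos_of_forall_nsmul_le {d y : α} (h : ∀ n : ℕ, n • d ≤ y) : d ≤ 0 := by
  have hbdd : BddAbove (Set.range fun n : ℕ => n • d) := ⟨y, Set.forall_mem_range.2 h⟩
  have hsup : (⨆ n : ℕ, n • d) + d ≤ ⨆ n : ℕ, n • d := by
    rw [← le_sub_iff_add_le]
    refine ciSup_le fun n => le_sub_iff_add_le.2 ?_
    rw [← succ_nsmul]
    exact le_ciSup hbdd (n + 1)
  exact (add_le_iff_nonpos_right _).1 hsup

/-- `⨆ n, n • u ⊓ x` is the projection of `x` onto the band of `u`; what is left is disjoint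
from `u`. -/
theorem sub_iSup_nsmul_inf_inf_eq_zero {x u : α} (hx : 0 ≤ x) (hu : 0 ≤ u) :
    (x - ⨆ n : ℕ, (n • u) ⊓ x) ⊓ u = 0 := by
  set s := ⨆ n : ℕ, (n • u) ⊓ x
  have hbdd : BddAbove (Set.range fun n : ℕ => (n • u) ⊓ x) :=
    ⟨x, Set.forall_mem_range.2 fun _ => inf_le_right⟩
  set d := (x - s) ⊓ u
  have hd : 0 ≤ d := le_inf (sub_nonneg.2 (ciSup_le fun _ => inf_le_right)) hu
  have hnd : ∀ n : ℕ, n • d ≤ x := by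
    intro n
    induction n with
    | zero => rwa [zero_nsmul]
    | succ n ih =>
      have hns : n • d ≤ s :=
        (le_inf (nsmul_le_nsmul_right inf_le_right n) ih).trans (le_ciSup hbdd n)
      rw [succ_nsmul, ← le_sub_iff_add_le']
      exact inf_le_left.trans (sub_le_sub_left hns x)
  exact le_antisymm (nonpos_of_forall_nsmul_le hnd) hd

end ConditionallyComplete

theorem abs_mul_le_abs_mul_abs {R : Type*} [CommRing R] [Lattice R] [IsOrderedRing R] (a b : R) :
    |a * b| ≤ |a| * |b| := by
  have mul_le (a b : R) : a * b ≤ |a| * |b| := by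
    have hparts : |a| * |b| - a * b = 2 * (a⁺ * b⁻) + 2 * (a⁻ * b⁺) := by
      linear_combination (-|b|) * posPart_add_negPart a - (a⁺ + a⁻) * posPart_add_negPart b +
        b * posPart_sub_negPart a + (a⁺ - a⁻) * posPart_sub_negPart b
    rw [← sub_nonneg, hparts]
    exact add_nonneg (mul_nonneg zero_le_two (mul_nonneg (posPart_nonneg a) (negPart_nonneg b)))
      (mul_nonneg zero_le_two (mul_nonneg (negPart_nonneg a) (posPart_nonneg b)))
  refine sup_le (mul_le a b) ?_
  simpa using mul_le (-a) b

class IsFAlgebra (R : Type*) [CommRing R] [Lattice R] : Prop where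
  add_le_add_left : ∀ a b c : R, a ≤ b → a + c ≤ b + c
  mul_nonneg : ∀ a b : R, 0 ≤ a → 0 ≤ b → 0 ≤ a * b
  mul_inf_eq_zero : ∀ a b c : R, a ⊓ b = 0 → 0 ≤ c → (c * a) ⊓ b = 0

section FAlgebra

variable {R : Type*} [CommRing R] [Lattice R] [IsFAlgebra R]

instance : IsOrderedAddMonoid R where
  add_le_add_left a b h c := IsFAlgebra.add_le_add_left a b c h

theorem mul_eq_zero_of_inf_eq_zero {a b : R} (h : a ⊓ b = 0) : a * b = 0 := by
  have hba : (b * a) ⊓ b = 0 := IsFAlgebra.mul_inf_eq_zero a b b h (h ▸ inf_le_right)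
  rw [inf_comm, mul_comm] at hba
  simpa using IsFAlgebra.mul_inf_eq_zero b (a * b) a hba (h ▸ inf_le_left)

theorem IsFAlgebra.mul_self_nonneg (a : R) : 0 ≤ a * a := by
  have hdisj := mul_eq_zero_of_inf_eq_zero (posPart_inf_negPart_eq_zero a)
  calc 0 ≤ a⁺ * a⁺ + a⁻ * a⁻ :=
        add_nonneg (IsFAlgebra.mul_nonneg _ _ (posPart_nonneg a) (posPart_nonneg a))
          (IsFAlgebra.mul_nonneg _ _ (negPart_nonneg a) (negPart_nonneg a))
    _ = (a⁺ - a⁻) * (a⁺ - a⁻) := by linear_combination 2 * hdisj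
    _ = a * a := by rw [posPart_sub_negPart]

instance : ZeroLEOneClass R where
  zero_le_one := by simpa using IsFAlgebra.mul_self_nonneg (1 : R)

instance : IsOrderedRing R := .of_mul_nonneg IsFAlgebra.mul_nonneg

theorem mul_inf_mul_eq_zero {a b c : R} (h : a ⊓ b = 0) (hc : 0 ≤ c) :
    (c * a) ⊓ (c * b) = 0 := by
  have hca : (c * a) ⊓ b = 0 := IsFAlgebra.mul_inf_eq_zero a b c h hc
  rw [inf_comm] at hca ⊢
  exact IsFAlgebra.mul_inf_eq_zero b (c * a) c hca hc

theorem mul_eq_zero_of_abs_inf_eq_zero {a q : R} (h : |a| ⊓ q = 0) : q * a = 0 := by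
  have hpart {z : R} (hz : 0 ≤ z) (hza : z ≤ |a|) : q * z = 0 := by
    rw [mul_comm]
    exact mul_eq_zero_of_inf_eq_zero (inf_eq_zero_of_le hz hza h)
  have hpos := hpart (posPart_nonneg a) (posPart_le_abs a)
  have hneg := hpart (negPart_nonneg a) (negPart_le_abs a)
  rw [← posPart_sub_negPart a, mul_sub, hpos, hneg, sub_zero]

end FAlgebra

theorem mem_bandGen_self (u : F) : u ∈ bandGen u :=
  Set.mem_sInter.2 fun _ hB => hB.2

theorem isSolid_bandGen (u : F) : LatticeOrderedAddCommGroup.IsSolid (bandGen u) := fun x hx y hy =>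
  Set.mem_sInter.2 fun B hB => hB.1.2.2.1 x (Set.mem_sInter.1 hx B hB) y hy

theorem isBand_setOf_abs_inf_eq_zero [AddLeftMono F] {w : F} (hw : 0 ≤ w) :
    IsBand {y : F | |y| ⊓ w = 0} := by
  have of_nonpos (y : F) (hy : |y| ⊓ w ≤ 0) : |y| ⊓ w = 0 :=
    le_antisymm hy (le_inf (abs_nonneg y) hw)
  refine ⟨by simp [hw], fun x hx y hy => of_nonpos _ ?_, fun x hx y hy => ?_,
    fun S hS a ha => of_nonpos _ ?_⟩
  · calc |x + y| ⊓ w ≤ (|x| + |y|) ⊓ w := inf_le_inf_right w (abs_add_le x y)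
      _ ≤ |x| ⊓ w + |y| ⊓ w := add_inf_le_inf_add_inf (abs_nonneg x) (abs_nonneg y) hw
      _ = 0 := by rw [show |x| ⊓ w = 0 from hx, show |y| ⊓ w = 0 from hy, add_zero]
  · exact inf_eq_zero_of_le (abs_nonneg y) hy hx
  · obtain rfl | ⟨s, hs⟩ := S.eq_empty_or_nonempty
    · -- the least upper bound of `∅` is a least element, so the group is trivial
      exact (le_sub_self_iff a).1 (ha.2 (by simp : a - |a| ⊓ w ∈ upperBounds ∅))
    have hpos : a ⊓ w ≤ 0 :=
      ha.inf_nonpos fun t ht => (inf_le_inf_right w (le_abs_self t)).trans_eq (hS ht)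
    have hneg : (-a) ⊓ w ≤ 0 :=
      (inf_le_inf_right w ((neg_le_neg_iff.2 (ha.1 hs)).trans (neg_le_abs s))).trans_eq (hS hs)
    exact (isLUB_pair (a := a) (b := -a)).inf_nonpos (by simp [hpos, hneg])

theorem bandUnitPart_le_one (g : F) : bandUnitPart g ≤ 1 :=
  ciSup_le fun _ => inf_le_right

theorem nsmul_abs_inf_one_le_bandUnitPart (g : F) (n : ℕ) :
    (n • |g|) ⊓ 1 ≤ bandUnitPart g :=
  le_ciSup (f := fun n : ℕ => (n • |g|) ⊓ 1)
    ⟨1, Set.forall_mem_range.2 fun _ => inf_le_right⟩ n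

theorem bandUnitPart_nonneg [ZeroLEOneClass F] (g : F) : 0 ≤ bandUnitPart g := by
  have := nsmul_abs_inf_one_le_bandUnitPart g 0
  rwa [zero_nsmul, inf_eq_left.2 zero_le_one] at this

theorem one_sub_bandUnitPart_inf_abs [AddLeftMono F] [ZeroLEOneClass F] (g : F) :
    (1 - bandUnitPart g) ⊓ |g| = 0 :=
  sub_iSup_nsmul_inf_inf_eq_zero zero_le_one (abs_nonneg g)

theorem abs_inf_one_sub_bandUnitPart_of_mem_bandGen [AddLeftMono F] [ZeroLEOneClass F]
    {g h : F} (hh : h ∈ bandGen |g|) : |h| ⊓ (1 - bandUnitPart g) = 0 := by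
  refine Set.mem_sInter.1 hh _
    ⟨isBand_setOf_abs_inf_eq_zero (sub_nonneg.2 (bandUnitPart_le_one g)), ?_⟩
  show |(|g|)| ⊓ _ = 0
  rw [abs_abs, inf_comm]
  exact one_sub_bandUnitPart_inf_abs g

theorem bandUnitPart_mul_of_mem_bandGen [IsFAlgebra F] {g h : F} (hh : h ∈ bandGen |g|) :
    bandUnitPart g * h = h := by
  have hq := mul_eq_zero_of_abs_inf_eq_zero (abs_inf_one_sub_bandUnitPart_of_mem_bandGen hh)
  linear_combination -hq

theorem le_bandUnitPart_of_inf_one_sub_eq_zero [AddLeftMono F] [ZeroLEOneClass F] (g : F) {a : F}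
    (ha : a ≤ 1) (hdisj : a ⊓ (1 - bandUnitPart g) = 0) : a ≤ bandUnitPart g :=
  calc a = (bandUnitPart g + (1 - bandUnitPart g)) ⊓ a := by
        rw [add_sub_cancel, inf_eq_right.2 ha]
    _ ≤ bandUnitPart g ⊓ a + (1 - bandUnitPart g) ⊓ a :=
      add_inf_le_inf_add_inf (bandUnitPart_nonneg g) (sub_nonneg.2 (bandUnitPart_le_one g))
        (hdisj ▸ inf_le_left)
    _ = bandUnitPart g ⊓ a := by rw [inf_comm (1 - _), hdisj, add_zero]
    _ ≤ bandUnitPart g := inf_le_left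

theorem bandUnitPart_le_of_mem_bandGen [AddLeftMono F] [ZeroLEOneClass F] {g h : F}
    (hh : h ∈ bandGen |g|) : bandUnitPart h ≤ bandUnitPart g :=
  ciSup_le fun n => le_bandUnitPart_of_inf_one_sub_eq_zero g inf_le_right <|
    inf_eq_zero_of_le (le_inf (nsmul_nonneg (abs_nonneg h) n) zero_le_one) inf_le_left
      (nsmul_inf_eq_zero (abs_inf_one_sub_bandUnitPart_of_mem_bandGen hh) n)

theorem isLUB_nsmul_abs_inf_abs_mul [IsFAlgebra F] (u : F) {c : F} (hc : 0 ≤ c) :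
    IsLUB (Set.range fun n : ℕ => (n • |u|) ⊓ (|u| * c)) (|u| * c) := by
  set x := |u| * c
  have hx : 0 ≤ x := mul_nonneg (abs_nonneg u) hc
  have hbdd : BddAbove (Set.range fun n : ℕ => (n • |u|) ⊓ x) :=
    ⟨x, Set.forall_mem_range.2 fun _ => inf_le_right⟩
  have hs : 0 ≤ ⨆ n : ℕ, (n • |u|) ⊓ x := by
    have := le_ciSup hbdd 0
    simp only [zero_nsmul, inf_eq_left.2 hx] at this
    exact this
  have hdisj : x ⊓ (x - ⨆ n : ℕ, (n • |u|) ⊓ x) = 0 := by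
    have := IsFAlgebra.mul_inf_eq_zero _ _ c
      (by rw [inf_comm]; exact sub_iSup_nsmul_inf_inf_eq_zero hx (abs_nonneg u)) hc
    rwa [mul_comm] at this
  have hxs := inf_eq_zero_of_le (sub_nonneg.2 (ciSup_le fun _ => inf_le_right))
    (sub_le_self x hs) hdisj
  rw [inf_idem, sub_eq_zero] at hxs
  have := isLUB_ciSup hbdd
  rwa [← hxs] at this

theorem mem_bandGen_of_abs_le_abs_mul [IsFAlgebra F] {u c y : F} (hc : 0 ≤ c)
    (hy : |y| ≤ |u| * c) : y ∈ bandGen |u| := by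
  refine Set.mem_sInter.2 fun B ⟨⟨hB0, hBadd, hBsolid, hBlub⟩, hBu⟩ => ?_
  have hnsmul (n : ℕ) : n • |u| ∈ B := by
    induction n with
    | zero => rwa [zero_nsmul]
    | succ n ih => rw [succ_nsmul]; exact hBadd _ ih _ hBu
  have hx0 : 0 ≤ |u| * c := mul_nonneg (abs_nonneg u) hc
  have hx : |u| * c ∈ B := by
    refine hBlub _ (Set.range_subset_iff.2 fun n => hBsolid _ (hnsmul n) _ ?_) _
      (isLUB_nsmul_abs_inf_abs_mul u hc)
    rw [abs_of_nonneg (le_inf (nsmul_nonneg (abs_nonneg u) n) hx0),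
      abs_of_nonneg (nsmul_nonneg (abs_nonneg u) n)]
    exact inf_le_left
  exact hBsolid _ hx y (by rwa [abs_of_nonneg hx0])

namespace IsCanonPartialInverse

variable [IsFAlgebra F] {g h h' : F}

theorem unique (hh : IsCanonPartialInverse g h) (hh' : IsCanonPartialInverse g h') : h = h' :=
  calc h = bandUnitPart g * h := (bandUnitPart_mul_of_mem_bandGen hh.1).symm
    _ = g * h' * h := by rw [hh'.2.1]
    _ = g * h * h' := by ring
    _ = bandUnitPart g * h' := by rw [hh.2.1]
    _ = h' := bandUnitPart_mul_of_mem_bandGen hh'.1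

theorem symm (hh : IsCanonPartialInverse g h) : IsCanonPartialInverse h g := by
  obtain ⟨hmem, hgh, hhg⟩ := hh
  have hsq : 0 ≤ g * g := IsFAlgebra.mul_self_nonneg g
  have hg : g = h * (g * g) := calc
    g = bandUnitPart g * g :=
      (bandUnitPart_mul_of_mem_bandGen (isSolid_bandGen _ (mem_bandGen_self _) (abs_abs g).ge)).symm
    _ = h * (g * g) := by rw [← hgh]; ring
  have hgmem : g ∈ bandGen |h| := mem_bandGen_of_abs_le_abs_mul hsq <| calc
    |g| = |h * (g * g)| := by rw [← hg]
    _ ≤ |h| * |g * g| := abs_mul_le_abs_mul_abs _ _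
    _ = |h| * (g * g) := by rw [abs_of_nonneg hsq]
  have hP : bandUnitPart h = bandUnitPart g :=
    le_antisymm (bandUnitPart_le_of_mem_bandGen hmem) (bandUnitPart_le_of_mem_bandGen hgmem)
  exact ⟨hgmem, hP ▸ hhg, hP ▸ hgh⟩

theorem nonneg (hh : IsCanonPartialInverse g h) (hg : 0 ≤ g) : 0 ≤ h := by
  obtain ⟨hmem, hgh, hhg⟩ := hh
  have hle : g * h⁻ ≤ g * h⁺ := sub_nonneg.1 <| by
    rw [← mul_sub, posPart_sub_negPart, hgh]
    exact bandUnitPart_nonneg g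
  have hgneg : g * h⁻ = 0 := by
    rw [← inf_eq_left.2 hle, inf_comm]
    exact mul_inf_mul_eq_zero (posPart_inf_negPart_eq_zero h) hg
  have hnegmem : h⁻ ∈ bandGen |g| :=
    isSolid_bandGen _ hmem ((abs_of_nonneg (negPart_nonneg h)).trans_le (negPart_le_abs h))
  have hneg : h⁻ = 0 := calc
    h⁻ = bandUnitPart g * h⁻ := (bandUnitPart_mul_of_mem_bandGen hnegmem).symm
    _ = h * (g * h⁻) := by rw [← hhg]; ring
    _ = 0 := by rw [hgneg, mul_zero]
  exact negPart_eq_zero.1 hneg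

end IsCanonPartialInverse

theorem stmt1_general
    -- `F` is a lattice-ordered ring which is an `f`-algebra:
    (haddLe : ∀ a b c : F, a ≤ b → a + c ≤ b + c)
    (hmulPos : ∀ a b : F, 0 ≤ a → 0 ≤ b → 0 ≤ a * b)
    (hfAlg : ∀ a b c : F, a ⊓ b = 0 → 0 ≤ c → (c * a) ⊓ b = 0)
    (g : F) :
    (∀ h₁ h₂ : F, IsCanonPartialInverse g h₁ → IsCanonPartialInverse g h₂ → h₁ = h₂) ∧
    (∀ h : F, IsCanonPartialInverse g h → IsCanonPartialInverse h g) ∧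
    (0 ≤ g → ∀ h : F, IsCanonPartialInverse g h → 0 ≤ h) := by
  have : IsFAlgebra F := ⟨haddLe, hmulPos, hfAlg⟩
  exact ⟨fun _ _ hh hh' => hh.unique hh', fun _ hh => hh.symm, fun hg _ hh => hh.nonneg hg⟩

/-- The canonical partial inverse of any `g` is unique; `g` is in
turn the canonical partial inverse of its canonical partial inverse `h`; and if
`g` is positive then so is its canonical partial inverse. -/
theorem stmt1
    -- `F` is a lattice-ordered ring which is an `f`-algebra:
    (haddLe : ∀ a b c : F, a ≤ b → a + c ≤ b + c)
    (hmulPos : ∀ a b : F, 0 ≤ a → 0 ≤ b → 0 ≤ a * b)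
    (hfAlg : ∀ a b c : F, a ⊓ b = 0 → 0 ≤ c → (c * a) ⊓ b = 0)
    -- the multiplicative unit `e = 1` is a weak order unit:
    (hunit : ∀ x : F, 0 ≤ x → x ⊓ 1 = 0 → x = 0)
    -- lateral completeness (together with Dedekind completeness of the
    -- conditionally complete lattice: universal completeness):
    (hlat : ∀ S : Set F, (∀ x ∈ S, 0 ≤ x) → S.Pairwise (fun x y => x ⊓ y = 0) → BddAbove S)
    (g : F) :
    (∀ h₁ h₂ : F, IsCanonPartialInverse g h₁ → IsCanonPartialInverse g h₂ → h₁ = h₂) ∧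
    (∀ h : F, IsCanonPartialInverse g h → IsCanonPartialInverse h g) ∧
    (0 ≤ g → ∀ h : F, IsCanonPartialInverse g h → 0 ≤ h) :=
  stmt1_general haddLe hmulPos hfAlg g
end

section
/- If 𝔣 and 𝔤 are T-linear functionals on E = L^2(T), each dominated in absolute value by a positive multiple (in R(T)) of the R(T)-valued norm ‖·‖_{T,2}, then their Riesz–Kantorovich supremum 𝔣 ∨ 𝔤 is also so dominated: if |𝔣(x)| ≤ k_𝔣‖x‖_{T,2} and |𝔤(x)| ≤ k_𝔤‖x‖_{T,2} for all x, then |(𝔣 ∨ 𝔤)(x)| ≤ (k_𝔣 + k_𝔤)‖x‖_{T,2} for all x ∈ E. -/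
/-!
Common setup.  `E` models the universal completion `E_u` of the `T`-universally
complete Riesz space `L¹(T)`: a Dedekind complete (conditionally complete)
`f`-algebra whose multiplicative unit `1 = e = Te` is a weak order unit.
`T : E → E` models the strictly positive conditional expectation operator,
`L1 ⊆ E` its natural domain `L¹(T)`, `L2 L1` the space `L²(T)` and `RT T` the
range `R(T)` of `T`.
-/

variable {E : Type*}

/-- The range `R(T)` of the conditional expectation operator. -/
def RT (T : E → E) : Set E := Set.range T

/-- `L²(T) = {f ∈ L¹(T) : f² ∈ L¹(T)}`, the product taken in the `f`-algebra `E_u`. -/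
def L2 [Mul E] (L1 : Set E) : Set E := {f | f ∈ L1 ∧ f * f ∈ L1}

variable [CommRing E] [ConditionallyCompleteLattice E]

/-- `T` is a strictly positive conditional expectation operator on the
`T`-universally complete space `L¹(T)` (modelled by the set `L1` inside the
Dedekind complete `f`-algebra `E`), with `1 = e = Te` a weak order unit. -/
structure IsCondExp (T : E → E) (L1 : Set E) : Prop where
  /-- compatibility of the order with addition -/
  addLe : ∀ a b c : E, a ≤ b → a + c ≤ b + c
  /-- products of positive elements are positive -/
  mulPos : ∀ a b : E, 0 ≤ a → 0 ≤ b → 0 ≤ a * b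
  /-- the `f`-algebra property -/
  fAlg : ∀ a b c : E, a ⊓ b = 0 → 0 ≤ c → (c * a) ⊓ b = 0
  /-- `1 = e` is a weak order unit -/
  weakUnit : ∀ x : E, 0 ≤ x → x ⊓ 1 = 0 → x = 0
  /-- `T` is additive -/
  addT : ∀ a b : E, T (a + b) = T a + T b
  /-- `T` is positive -/
  posT : ∀ a : E, 0 ≤ a → 0 ≤ T a
  /-- `T` is strictly positive -/
  strictT : ∀ a : E, 0 ≤ a → T a = 0 → a = 0
  /-- `T` is a projection -/
  projT : ∀ a : E, T (T a) = T a
  /-- `T` maps the weak order unit `e = 1` to itself -/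
  unitT : T 1 = 1
  /-- `T` is an averaging operator: `T(T a · b) = T a · T b` -/
  avgT : ∀ a b : E, T (T a * b) = T a * T b
  /-- `T` is order continuous -/
  ordContT : ∀ S : Set E, S.Nonempty → DirectedOn (· ≥ ·) S → (∀ x ∈ S, 0 ≤ x) →
      IsGLB S 0 → IsGLB (T '' S) 0
  /-- `L¹(T)` is closed under addition -/
  l1add : ∀ a ∈ L1, ∀ b ∈ L1, a + b ∈ L1
  /-- `L¹(T)` is solid -/
  l1sol : ∀ a ∈ L1, ∀ b : E, |b| ≤ |a| → b ∈ L1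
  /-- `R(T) ⊆ L¹(T)` and `T` maps `L¹(T)` into itself -/
  rtL1 : ∀ a : E, T a ∈ L1
  /-- `L²(T)` is an `R(T)`-module -/
  l2mod : ∀ α ∈ RT T, ∀ x ∈ L2 L1, α * x ∈ L2 L1
  /-- `T`-universal completeness of `L¹(T)` -/
  tuc : ∀ S : Set E, S.Nonempty → (∀ x ∈ S, 0 ≤ x ∧ x ∈ L1) → DirectedOn (· ≤ ·) S →
      BddAbove (T '' S) → BddAbove S ∧ sSup S ∈ L1

/-- `sqrt` is a square-root function on the positive cone of the `f`-algebra. -/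
def IsSqrt (sqrt : E → E) : Prop := ∀ a : E, 0 ≤ a → 0 ≤ sqrt a ∧ sqrt a * sqrt a = a

/-- The `R(T)`-valued norm `‖f‖_{T,2} = (T (f²))^{1/2}` on `L²(T)`. -/
def nrm (T : E → E) (sqrt : E → E) (f : E) : E := sqrt (T (f * f))

/-- A `T`-linear functional on `E = L²(T)`: `R(T)`-valued, additive,
`R(T)`-homogeneous and order bounded.  The set of these is the `T`-dual `E*`. -/
def TLinear (T : E → E) (L1 : Set E) (F : E → E) : Prop :=
  (∀ x ∈ L2 L1, F x ∈ RT T) ∧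
  (∀ x ∈ L2 L1, ∀ y ∈ L2 L1, F (x + y) = F x + F y) ∧
  (∀ α ∈ RT T, ∀ x ∈ L2 L1, F (α * x) = α * F x) ∧
  (∀ x ∈ L2 L1, 0 ≤ x → ∃ b : E, ∀ y ∈ L2 L1, |y| ≤ x → |F y| ≤ b)

/-- `T`-strong boundedness: `|F x| ≤ k ‖x‖_{T,2}` for some `k ∈ R(T)₊`. -/
def StronglyBdd (T : E → E) (L1 : Set E) (sqrt : E → E) (F : E → E) : Prop :=
  ∃ k ∈ RT T, 0 ≤ k ∧ ∀ x ∈ L2 L1, |F x| ≤ k * nrm T sqrt x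

/-- Membership in the `T`-strong dual `Ê` of `L²(T)`. -/
def MemEhat (T : E → E) (L1 : Set E) (sqrt : E → E) (F : E → E) : Prop :=
  TLinear T L1 F ∧ StronglyBdd T L1 sqrt F

/-- The Riesz representation map `Ψ(f)(g) = T (f g)`. -/
def Psi (T : E → E) (f : E) : E → E := fun g => T (f * g)

/-- The Riesz–Kantorovich set `{F y + G z : y, z ∈ L²(T)₊, y + z = x}` whose
supremum is `(F ∨ G)(x)` and whose infimum is `(F ∧ G)(x)`. -/
def RKset (L1 : Set E) (F G : E → E) (x : E) : Set E :=
  {v | ∃ y z : E, y ∈ L2 L1 ∧ z ∈ L2 L1 ∧ 0 ≤ y ∧ 0 ≤ z ∧ y + z = x ∧ v = F y + G z}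

/-- The partial order on functionals: `F ≤ G` iff `F x ≤ G x` for all `x ∈ L²(T)₊`. -/
def leF [Mul E] (L1 : Set E) (F G : E → E) : Prop := ∀ x ∈ L2 L1, 0 ≤ x → F x ≤ G x

/-!
Write `x = x⁺ - x⁻`. For `0 ≤ p, q ≤ |x|` and any `p = y + z` with `y, z ≥ 0`,
`F y + G z = F y + G (z - q) + G q` where both `y` and `z - q` are dominated by `|x|`; hence
`(F ∨ G) p ≤ (k_F + k_G) ‖x‖_{T,2} + G q ≤ (k_F + k_G) ‖x‖_{T,2} + (F ∨ G) q`.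
The pairs `(x⁺, x⁻)` and `(x⁻, x⁺)` bound `±(F ∨ G) x`.

This needs `‖·‖_{T,2}` to be monotone in `|x|`, i.e. square roots of positive elements to be
monotone. That follows from semiprimeness (`0 ≤ a`, `a * a = 0` imply `a = 0`), which holds
because Dedekind completeness makes `E` Archimedean and `1` is a weak order unit.
-/

theorem le_zero_of_forall_nsmul_le {α : Type*} [AddCommGroup α] [ConditionallyCompleteLattice α]
    [IsOrderedAddMonoid α] {b c : α} (h : ∀ n : ℕ, n • b ≤ c) : b ≤ 0 := by
  set S := Set.range fun n : ℕ => n • b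
  have hbdd : BddAbove S := ⟨c, by rintro _ ⟨n, rfl⟩; exact h n⟩
  have hshift : sSup S + b ≤ sSup S := by
    rw [← le_sub_iff_add_le]
    refine csSup_le ⟨0 • b, 0, rfl⟩ ?_
    rintro _ ⟨n, rfl⟩
    rw [le_sub_iff_add_le, ← succ_nsmul]
    exact le_csSup hbdd ⟨n + 1, rfl⟩
  exact (add_le_iff_nonpos_right _).mp hshift

namespace IsCondExp

variable {T : E → E} {L1 : Set E}

theorem isOrderedAddMonoid (hT : IsCondExp T L1) : IsOrderedAddMonoid E where
  add_le_add_left a b h c := hT.addLe a b c h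

theorem mul_eq_zero_of_inf_eq_zero (hT : IsCondExp T L1) {a b : E} (ha : 0 ≤ a) (hb : 0 ≤ b)
    (h : a ⊓ b = 0) : a * b = 0 := by
  have hba : (b * a) ⊓ b = 0 := hT.fAlg a b b h hb
  have hab : (a * b) ⊓ (b * a) = 0 := hT.fAlg b (b * a) a (by rwa [inf_comm]) ha
  rwa [mul_comm b a, inf_idem] at hab

theorem posPart_mul_negPart (hT : IsCondExp T L1) (a : E) : a⁺ * a⁻ = 0 := by
  have := hT.isOrderedAddMonoid
  exact hT.mul_eq_zero_of_inf_eq_zero (posPart_nonneg a) (negPart_nonneg a)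
    (posPart_inf_negPart_eq_zero a)

theorem posPart_mul_self (hT : IsCondExp T L1) (a : E) : a⁺ * a = a⁺ * a⁺ := by
  have := hT.isOrderedAddMonoid
  linear_combination (-a⁺) * posPart_sub_negPart a - hT.posPart_mul_negPart a

theorem zero_le_one (hT : IsCondExp T L1) : (0 : E) ≤ 1 := by
  have := hT.isOrderedAddMonoid
  have hneg : (1 : E)⁻ = -((1 : E)⁻ * (1 : E)⁻) := by
    linear_combination (-(1 : E)⁻) * posPart_sub_negPart (1 : E) + hT.posPart_mul_negPart 1
  have hneg0 : (1 : E)⁻ = 0 :=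
    le_antisymm (hneg ▸ neg_nonpos.mpr (hT.mulPos _ _ (negPart_nonneg _) (negPart_nonneg _)))
      (negPart_nonneg _)
  exact negPart_eq_zero.mp hneg0

theorem isOrderedRing (hT : IsCondExp T L1) : IsOrderedRing E :=
  @IsOrderedRing.of_mul_nonneg _ _ _ hT.isOrderedAddMonoid ⟨hT.zero_le_one⟩ hT.mulPos

theorem eq_zero_of_mul_self_eq_zero (hT : IsCondExp T L1) {a : E} (ha : 0 ≤ a) (h : a * a = 0) :
    a = 0 := by
  have := hT.isOrderedRing
  set b := a ⊓ 1
  have hb0 : 0 ≤ b := le_inf ha hT.zero_le_one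
  have hbb : b * b = 0 :=
    le_antisymm (h ▸ mul_le_mul inf_le_left inf_le_left hb0 ha) (mul_nonneg hb0 hb0)
  have hbound : ∀ n : ℕ, n • b ≤ 1 := by
    intro n
    set d := (n • b - 1)⁺
    have hd0 : 0 ≤ d := posPart_nonneg _
    have hdb : d * b = 0 := by
      have hd_le : d ≤ n • b := sup_le (sub_le_self _ hT.zero_le_one) (nsmul_nonneg hb0 n)
      refine le_antisymm ?_ (mul_nonneg hd0 hb0)
      calc d * b ≤ n • b * b := mul_le_mul_of_nonneg_right hd_le hb0
        _ = 0 := by rw [smul_mul_assoc, hbb, smul_zero]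
    -- `d ⊥ (n • b - 1)⁻` and `d * b = 0` give `d * d = d * (n • b - 1) = -d`
    have hdd : d = -(d * d) := by
      linear_combination (n : E) * hdb - hT.posPart_mul_self (n • b - 1)
    have hd : d = 0 := le_antisymm (hdd ▸ neg_nonpos.mpr (mul_nonneg hd0 hd0)) hd0
    exact sub_nonpos.mp (posPart_eq_zero.mp hd)
  exact hT.weakUnit a ha (le_antisymm (le_zero_of_forall_nsmul_le hbound) hb0)

theorem le_of_mul_self_le_mul_self (hT : IsCondExp T L1) {p q : E} (hp : 0 ≤ p) (hq : 0 ≤ q)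
    (h : p * p ≤ q * q) : p ≤ q := by
  have := hT.isOrderedRing
  set c := (p - q)⁺
  have hc0 : 0 ≤ c := posPart_nonneg _
  have hcc : c * (p - q) = c * c := hT.posPart_mul_self (p - q)
  have hccp0 : 0 ≤ c * c * p := mul_nonneg (mul_nonneg hc0 hc0) hp
  have hccq0 : 0 ≤ c * c * q := mul_nonneg (mul_nonneg hc0 hc0) hq
  have hsum : c * c * p + c * c * q = 0 := by
    refine le_antisymm ?_ (add_nonneg hccp0 hccq0)
    calc c * c * p + c * c * q = c * (p * p - q * q) := by linear_combination (-(p + q)) * hcc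
      _ ≤ 0 := mul_nonpos_of_nonneg_of_nonpos hc0 (sub_nonpos.mpr h)
  have hccp : c * c * p = 0 := le_antisymm (hsum ▸ le_add_of_nonneg_right hccq0) hccp0
  have hccq : c * c * q = 0 := by linear_combination hsum - hccp
  have hc4 : (c * c) * (c * c) = 0 := by linear_combination c * hccp - c * hccq - c * c * hcc
  have hc : c = 0 :=
    hT.eq_zero_of_mul_self_eq_zero hc0 (hT.eq_zero_of_mul_self_eq_zero (mul_nonneg hc0 hc0) hc4)
  exact sub_nonpos.mp (posPart_eq_zero.mp hc)

theorem abs_mul_abs_self (hT : IsCondExp T L1) (a : E) : |a| * |a| = a * a := by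
  have := hT.isOrderedAddMonoid
  linear_combination (-(|a| + a⁺ + a⁻)) * posPart_add_negPart a
    + (a⁺ - a⁻ + a) * posPart_sub_negPart a + 4 * hT.posPart_mul_negPart a

theorem mul_self_nonneg (hT : IsCondExp T L1) (a : E) : 0 ≤ a * a := by
  have := hT.isOrderedRing
  rw [← hT.abs_mul_abs_self]
  exact mul_nonneg (abs_nonneg a) (abs_nonneg a)

theorem mul_self_le_mul_self_of_abs_le (hT : IsCondExp T L1) {x y : E} (h : |y| ≤ |x|) :
    y * y ≤ x * x := by
  have := hT.isOrderedRing
  rw [← hT.abs_mul_abs_self y, ← hT.abs_mul_abs_self x]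
  exact mul_le_mul h h (abs_nonneg y) (abs_nonneg x)

theorem monotone (hT : IsCondExp T L1) : Monotone T := by
  have := hT.isOrderedRing
  intro a b h
  calc T a ≤ T a + T (b - a) := le_add_of_nonneg_right (hT.posT _ (sub_nonneg.mpr h))
    _ = T b := by rw [← hT.addT, add_sub_cancel]

theorem nrm_le_nrm (hT : IsCondExp T L1) {sqrt : E → E} (hsqrt : IsSqrt sqrt) {x y : E}
    (h : |y| ≤ |x|) : nrm T sqrt y ≤ nrm T sqrt x := by
  obtain ⟨hy0, hy⟩ := hsqrt _ (hT.posT _ (hT.mul_self_nonneg y))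
  obtain ⟨hx0, hx⟩ := hsqrt _ (hT.posT _ (hT.mul_self_nonneg x))
  refine hT.le_of_mul_self_le_mul_self hy0 hx0 ?_
  rw [nrm, nrm, hy, hx]
  exact hT.monotone (hT.mul_self_le_mul_self_of_abs_le h)

theorem mem_L2_of_abs_le (hT : IsCondExp T L1) {x y : E} (hx : x ∈ L2 L1) (h : |y| ≤ |x|) :
    y ∈ L2 L1 := by
  have := hT.isOrderedRing
  refine ⟨hT.l1sol x hx.1 y h, hT.l1sol (x * x) hx.2 (y * y) ?_⟩
  rw [abs_of_nonneg (hT.mul_self_nonneg y), abs_of_nonneg (hT.mul_self_nonneg x)]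
  exact hT.mul_self_le_mul_self_of_abs_le h

theorem zero_mem_L2 (hT : IsCondExp T L1) : (0 : E) ∈ L2 L1 := by
  have hT0 : T 0 = 0 := (AddMonoidHom.mk' T hT.addT).map_zero
  have h0 : (0 : E) ∈ L1 := hT0 ▸ hT.rtL1 0
  exact ⟨h0, by rwa [mul_zero]⟩

end IsCondExp

theorem TLinear.map_zero {T F : E → E} {L1 : Set E} (hF : TLinear T L1 F)
    (h0 : (0 : E) ∈ L2 L1) : F 0 = 0 := by
  have h := hF.2.1 0 h0 0 h0
  rw [add_zero] at h
  exact left_eq_add.mp h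

section RieszKantorovich

variable {T : E → E} {L1 : Set E} {sqrt : E → E} {F G : E → E}

theorem le_mul_nrm_of_abs_le (hT : IsCondExp T L1) (hsqrt : IsSqrt sqrt) {k : E} (hk0 : 0 ≤ k)
    (hFb : ∀ x ∈ L2 L1, |F x| ≤ k * nrm T sqrt x) {x y : E} (hy : y ∈ L2 L1) (h : |y| ≤ |x|) :
    F y ≤ k * nrm T sqrt x := by
  have := hT.isOrderedRing
  exact (le_abs_self _).trans ((hFb y hy).trans
    (mul_le_mul_of_nonneg_left (hT.nrm_le_nrm hsqrt h) hk0))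

theorem right_le_of_isLUB_RKset (hT : IsCondExp T L1) (hF : TLinear T L1 F) {p σ : E}
    (hp : p ∈ L2 L1) (hp0 : 0 ≤ p) (hσ : IsLUB (RKset L1 F G p) σ) : G p ≤ σ :=
  hσ.1 ⟨0, p, hT.zero_mem_L2, hp, le_rfl, hp0, zero_add p,
    by rw [hF.map_zero hT.zero_mem_L2, zero_add]⟩

theorem le_add_of_isLUB_RKset (hT : IsCondExp T L1) (hsqrt : IsSqrt sqrt) (hG : TLinear T L1 G)
    {kF kG : E} (hkF0 : 0 ≤ kF) (hkG0 : 0 ≤ kG)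
    (hFb : ∀ x ∈ L2 L1, |F x| ≤ kF * nrm T sqrt x) (hGb : ∀ x ∈ L2 L1, |G x| ≤ kG * nrm T sqrt x)
    {x p q σ : E} (hx : x ∈ L2 L1) (hq : q ∈ L2 L1) (hq0 : 0 ≤ q) (hpx : p ≤ |x|) (hqx : q ≤ |x|)
    (hσ : IsLUB (RKset L1 F G p) σ) : σ ≤ (kF + kG) * nrm T sqrt x + G q := by
  have := hT.isOrderedRing
  refine hσ.2 ?_
  rintro _ ⟨y, z, hy, hz, hy0, hz0, rfl, rfl⟩
  have hyx : |y| ≤ |x| := by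
    rw [abs_of_nonneg hy0]
    exact (le_add_of_nonneg_right hz0).trans hpx
  have hzqx : |z - q| ≤ |x| := abs_le'.mpr
    ⟨(sub_le_self z hq0).trans ((le_add_of_nonneg_left hy0).trans hpx),
      by rw [neg_sub]; exact (sub_le_self q hz0).trans hqx⟩
  have hzq : z - q ∈ L2 L1 := hT.mem_L2_of_abs_le hx hzqx
  have hGz : G z = G (z - q) + G q := by rw [← hG.2.1 _ hzq _ hq, sub_add_cancel]
  calc F y + G z = F y + G (z - q) + G q := by rw [hGz, add_assoc]
    _ ≤ kF * nrm T sqrt x + kG * nrm T sqrt x + G q := by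
      gcongr
      · exact le_mul_nrm_of_abs_le hT hsqrt hkF0 hFb hy hyx
      · exact le_mul_nrm_of_abs_le hT hsqrt hkG0 hGb hzq hzqx
    _ = (kF + kG) * nrm T sqrt x + G q := by ring

theorem sub_le_of_isLUB_RKset (hT : IsCondExp T L1) (hsqrt : IsSqrt sqrt) (hF : TLinear T L1 F)
    (hG : TLinear T L1 G) {kF kG : E} (hkF0 : 0 ≤ kF) (hkG0 : 0 ≤ kG)
    (hFb : ∀ x ∈ L2 L1, |F x| ≤ kF * nrm T sqrt x) (hGb : ∀ x ∈ L2 L1, |G x| ≤ kG * nrm T sqrt x)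
    {x p q σ τ : E} (hx : x ∈ L2 L1) (hq : q ∈ L2 L1) (hq0 : 0 ≤ q) (hpx : p ≤ |x|)
    (hqx : q ≤ |x|) (hσ : IsLUB (RKset L1 F G p) σ) (hτ : IsLUB (RKset L1 F G q) τ) :
    σ - τ ≤ (kF + kG) * nrm T sqrt x := by
  have := hT.isOrderedRing
  calc σ - τ ≤ ((kF + kG) * nrm T sqrt x + G q) - G q :=
        sub_le_sub (le_add_of_isLUB_RKset hT hsqrt hG hkF0 hkG0 hFb hGb hx hq hq0 hpx hqx hσ)
          (right_le_of_isLUB_RKset hT hF hq hq0 hτ)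
    _ = (kF + kG) * nrm T sqrt x := add_sub_cancel_right _ _

end RieszKantorovich

theorem stmt4_general (T : E → E) (L1 : Set E) (hT : IsCondExp T L1)
    (sqrt : E → E) (hsqrt : IsSqrt sqrt)
    (F G s : E → E) (hF : TLinear T L1 F) (hG : TLinear T L1 G) (hs : TLinear T L1 s)
    (kF kG : E) (hkF0 : 0 ≤ kF) (hkG0 : 0 ≤ kG)
    (hFb : ∀ x ∈ L2 L1, |F x| ≤ kF * nrm T sqrt x)
    (hGb : ∀ x ∈ L2 L1, |G x| ≤ kG * nrm T sqrt x)
    (hsup : ∀ x ∈ L2 L1, 0 ≤ x → IsLUB (RKset L1 F G x) (s x)) :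
    ∀ x ∈ L2 L1, |s x| ≤ (kF + kG) * nrm T sqrt x := by
  have := hT.isOrderedRing
  intro x hx
  have hxp_le : x⁺ ≤ |x| := posPart_add_negPart x ▸ le_add_of_nonneg_right (negPart_nonneg x)
  have hxm_le : x⁻ ≤ |x| := posPart_add_negPart x ▸ le_add_of_nonneg_left (posPart_nonneg x)
  have hxp : x⁺ ∈ L2 L1 :=
    hT.mem_L2_of_abs_le hx (by rwa [abs_of_nonneg (posPart_nonneg x)])
  have hxm : x⁻ ∈ L2 L1 :=
    hT.mem_L2_of_abs_le hx (by rwa [abs_of_nonneg (negPart_nonneg x)])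
  have hsx : s x = s x⁺ - s x⁻ := eq_sub_of_add_eq <| by
    rw [← hs.2.1 x hx x⁻ hxm, ← eq_sub_iff_add_eq.mp (posPart_sub_negPart x).symm]
  have hσ := hsup _ hxp (posPart_nonneg x)
  have hτ := hsup _ hxm (negPart_nonneg x)
  rw [abs_le', hsx, neg_sub]
  exact ⟨sub_le_of_isLUB_RKset hT hsqrt hF hG hkF0 hkG0 hFb hGb hx hxm (negPart_nonneg x)
      hxp_le hxm_le hσ hτ,
    sub_le_of_isLUB_RKset hT hsqrt hF hG hkF0 hkG0 hFb hGb hx hxp (posPart_nonneg x)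
      hxm_le hxp_le hτ hσ⟩

/-- If `|F x| ≤ k_F ‖x‖_{T,2}` and `|G x| ≤ k_G ‖x‖_{T,2}` for all
`x`, then the Riesz–Kantorovich supremum `s = F ∨ G` satisfies
`|s x| ≤ (k_F + k_G) ‖x‖_{T,2}` for all `x ∈ E = L²(T)`. -/
theorem stmt4 (T : E → E) (L1 : Set E) (hT : IsCondExp T L1)
    (sqrt : E → E) (hsqrt : IsSqrt sqrt)
    (F G s : E → E) (hF : TLinear T L1 F) (hG : TLinear T L1 G) (hs : TLinear T L1 s)
    (kF kG : E) (hkF : kF ∈ RT T) (hkF0 : 0 ≤ kF) (hkG : kG ∈ RT T) (hkG0 : 0 ≤ kG)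
    (hFb : ∀ x ∈ L2 L1, |F x| ≤ kF * nrm T sqrt x)
    (hGb : ∀ x ∈ L2 L1, |G x| ≤ kG * nrm T sqrt x)
    (hsup : ∀ x ∈ L2 L1, 0 ≤ x → IsLUB (RKset L1 F G x) (s x)) :
    ∀ x ∈ L2 L1, |s x| ≤ (kF + kG) * nrm T sqrt x :=
  stmt4_general T L1 hT sqrt hsqrt F G s hF hG hs kF kG hkF0 hkG0 hFb hGb hsup
end

section
/- The conditional expectation operator T itself, regarded as an element of the T-strong dual Ê of E = L^2(T) (namely T = Ψ(e) where Ψ(f)(g) = T(fg)), is a weak order unit for Ê: for every 𝔣 ∈ Ê_+ and every x ∈ E_+, sup_{n ∈ ℕ} (𝔣 ∧ nT)(x) = 𝔣(x). -/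
set_option linter.unusedSectionVars false


/-!
Common setup.  `E` models the universal completion `E_u` of the `T`-universally
complete Riesz space `L¹(T)`: a Dedekind complete (conditionally complete)
`f`-algebra whose multiplicative unit `1 = e = Te` is a weak order unit.
`T : E → E` models the strictly positive conditional expectation operator,
`L1 ⊆ E` its natural domain `L¹(T)`, `L2 L1` the space `L²(T)` and `RT T` the
range `R(T)` of `T`.
-/

variable {E : Type*}

variable [CommRing E] [ConditionallyCompleteLattice E]

set_option linter.unusedSectionVars false


section Helpers
variable (hadd : ∀ a b c : E, a ≤ b → a + c ≤ b + c)
include hadd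

lemma st_sub (a b : E) : a ≤ b ↔ 0 ≤ b - a := by
  constructor
  · intro h
    have h2 := hadd a b (-a) h
    rwa [add_neg_cancel, ← sub_eq_add_neg] at h2
  · intro h
    have h2 := hadd 0 (b - a) a h
    rwa [zero_add, sub_add_cancel] at h2

lemma st_sub_le {a b : E} (h : a ≤ b) (c : E) : a - c ≤ b - c := by
  have h2 := hadd a b (-c) h
  rwa [← sub_eq_add_neg, ← sub_eq_add_neg] at h2

lemma st_add0 {a b : E} (ha : 0 ≤ a) (hb : 0 ≤ b) : 0 ≤ a + b := by
  have h2 := hadd 0 a b ha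
  rw [zero_add] at h2
  exact le_trans hb h2

lemma st_add_le {a b c d : E} (h1 : a ≤ b) (h2 : c ≤ d) : a + c ≤ b + d := by
  refine le_trans (hadd a b c h1) ?_
  have h3 := hadd c d b h2
  rwa [add_comm c b, add_comm d b] at h3

lemma st_neg_le {a b : E} (h : a ≤ b) : -b ≤ -a := by
  have h2 := hadd a b (-(a+b)) h
  rwa [show a + -(a+b) = -b by ring, show b + -(a+b) = -a by ring] at h2

lemma st_sup_add (a b c : E) : (a ⊔ b) + c = (a + c) ⊔ (b + c) := by
  apply le_antisymm
  · have ha : a ≤ ((a+c) ⊔ (b+c)) - c := by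
      have := st_sub_le hadd (le_sup_left : a + c ≤ (a+c) ⊔ (b+c)) c
      rwa [add_sub_cancel_right] at this
    have hb : b ≤ ((a+c) ⊔ (b+c)) - c := by
      have := st_sub_le hadd (le_sup_right : b + c ≤ (a+c) ⊔ (b+c)) c
      rwa [add_sub_cancel_right] at this
    have := hadd (a ⊔ b) (((a+c) ⊔ (b+c)) - c) c (sup_le ha hb)
    rwa [sub_add_cancel] at this
  · exact sup_le (hadd a (a ⊔ b) c le_sup_left) (hadd b (a ⊔ b) c le_sup_right)

lemma st_inf_add (a b c : E) : (a ⊓ b) + c = (a + c) ⊓ (b + c) := by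
  apply le_antisymm
  · exact le_inf (hadd _ _ _ inf_le_left) (hadd _ _ _ inf_le_right)
  · have ha : ((a+c) ⊓ (b+c)) - c ≤ a := by
      have := st_sub_le hadd (inf_le_left : (a+c) ⊓ (b+c) ≤ a + c) c
      rwa [add_sub_cancel_right] at this
    have hb : ((a+c) ⊓ (b+c)) - c ≤ b := by
      have := st_sub_le hadd (inf_le_right : (a+c) ⊓ (b+c) ≤ b + c) c
      rwa [add_sub_cancel_right] at this
    have := hadd (((a+c) ⊓ (b+c)) - c) (a ⊓ b) c (le_inf ha hb)
    rwa [sub_add_cancel] at this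

lemma st_neg_sup (a b : E) : -(a ⊔ b) = (-a) ⊓ (-b) := by
  apply le_antisymm
  · exact le_inf (st_neg_le hadd le_sup_left) (st_neg_le hadd le_sup_right)
  · have h1 : a ⊔ b ≤ -((-a) ⊓ (-b)) := by
      refine sup_le ?_ ?_
      · have := st_neg_le hadd (inf_le_left : (-a) ⊓ (-b) ≤ -a)
        rwa [neg_neg] at this
      · have := st_neg_le hadd (inf_le_right : (-a) ⊓ (-b) ≤ -b)
        rwa [neg_neg] at this
    have := st_neg_le hadd h1
    rwa [neg_neg] at this

lemma st_pos_eq (a : E) : a ⊔ 0 = a + ((-a) ⊔ 0) := by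
  rw [add_comm, st_sup_add hadd (-a) 0 a, neg_add_cancel, zero_add, sup_comm]

lemma st_posneg (a : E) : (a ⊔ 0) ⊓ ((-a) ⊔ 0) = 0 := by
  have h2 : a ⊓ 0 = -((-a) ⊔ 0) := by
    rw [st_neg_sup hadd, neg_neg, neg_zero]
  calc (a ⊔ 0) ⊓ ((-a) ⊔ 0) = (a + ((-a) ⊔ 0)) ⊓ (0 + ((-a) ⊔ 0)) := by
        rw [← st_pos_eq hadd, zero_add]
  _ = (a ⊓ 0) + ((-a) ⊔ 0) := (st_inf_add hadd a 0 _).symm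
  _ = 0 := by rw [h2]; ring

lemma st_nsmul_le {a b : E} (h : a ≤ b) (n : ℕ) : n • a ≤ n • b := by
  induction n with
  | zero => simp
  | succ n ih => rw [succ_nsmul, succ_nsmul]; exact st_add_le hadd ih h

lemma st_nsmul_nonneg {a : E} (h : 0 ≤ a) (n : ℕ) : 0 ≤ n • a := by
  have := st_nsmul_le hadd h n
  simpa using this

lemma st_nsmul_mono_nat {a : E} (ha : 0 ≤ a) {j j' : ℕ} (h : j ≤ j') : j • a ≤ j' • a := by
  have h1 : j' = j + (j' - j) := by omega
  rw [h1, add_nsmul]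
  have h2 : 0 ≤ (j' - j) • a := st_nsmul_nonneg hadd ha _
  have h3 := hadd 0 ((j' - j) • a) (j • a) h2
  rwa [zero_add, add_comm] at h3

lemma st_arch {d a : E} (h : ∀ m : ℕ, m • d ≤ a) : d ≤ 0 := by
  have hbdd : BddAbove (Set.range fun m : ℕ => m • d) := ⟨a, by rintro _ ⟨m, rfl⟩; exact h m⟩
  have hne : (Set.range fun m : ℕ => m • d).Nonempty := ⟨0 • d, ⟨0, rfl⟩⟩
  set s := sSup (Set.range fun m : ℕ => m • d) with hs
  have hub : ∀ m : ℕ, m • d ≤ s - d := by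
    intro m
    have h1 : (m+1) • d ≤ s := le_csSup hbdd ⟨m+1, rfl⟩
    rw [succ_nsmul] at h1
    have := st_sub_le hadd h1 d
    rwa [add_sub_cancel_right] at this
  have h2 : s ≤ s - d := csSup_le hne (by rintro _ ⟨m, rfl⟩; exact hub m)
  rw [st_sub hadd] at h2
  rw [show s - d - s = -d by ring] at h2
  have := st_neg_le hadd h2
  rwa [neg_neg, neg_zero] at this

end Helpers

section Mul
variable (hadd : ∀ a b c : E, a ≤ b → a + c ≤ b + c)
variable (hmul : ∀ a b : E, 0 ≤ a → 0 ≤ b → 0 ≤ a * b)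
include hadd hmul

lemma st_mul_le {a b c : E} (ha : 0 ≤ a) (h : b ≤ c) : a * b ≤ a * c := by
  rw [st_sub hadd]
  rw [show a * c - a * b = a * (c - b) by ring]
  exact hmul a (c - b) ha ((st_sub hadd _ _).1 h)

variable (hfa : ∀ a b c : E, a ⊓ b = 0 → 0 ≤ c → (c * a) ⊓ b = 0)
include hfa

lemma st_disj_mul {u v : E} (hu : 0 ≤ u) (hv : 0 ≤ v) (h : u ⊓ v = 0) : u * v = 0 := by
  have h1 : (v * u) ⊓ v = 0 := hfa u v v h hv
  have h2 : (u * v) ⊓ (v * u) = 0 := hfa v (v * u) u (by rw [inf_comm]; exact h1) hu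
  rw [mul_comm v u, inf_idem] at h2
  exact h2

lemma st_sq_nonneg (a : E) : 0 ≤ a * a := by
  have hp : (0:E) ≤ a ⊔ 0 := le_sup_right
  have hn : (0:E) ≤ (-a) ⊔ 0 := le_sup_right
  have hm : (a ⊔ 0) * ((-a) ⊔ 0) = 0 := st_disj_mul hadd hmul hfa hp hn (st_posneg hadd a)
  have ha : a = (a ⊔ 0) - ((-a) ⊔ 0) := eq_sub_of_add_eq (st_pos_eq hadd a).symm
  have key : a * a = (a ⊔ 0) * (a ⊔ 0) + ((-a) ⊔ 0) * ((-a) ⊔ 0) := by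
    linear_combination (a + (a ⊔ 0) - ((-a) ⊔ 0)) * ha - 2 * hm
  rw [key]
  exact st_add0 hadd (hmul _ _ hp hp) (hmul _ _ hn hn)

end Mul

section Part2
variable (hadd : ∀ a b c : E, a ≤ b → a + c ≤ b + c)
include hadd

lemma st_disj_add {a b c : E} (hb : 0 ≤ b) (hc : 0 ≤ c)
    (hab : a ⊓ b = 0) (hac : a ⊓ c = 0) : a ⊓ (b + c) = 0 := by
  have ha : 0 ≤ a := hab ▸ inf_le_left
  set u := a ⊓ (b + c) with hu
  have hu0 : 0 ≤ u := le_inf ha (st_add0 hadd hb hc)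
  have hua : u ≤ a := inf_le_left
  have hubc : u ≤ b + c := inf_le_right
  have h1 : u - b ≤ c := by
    have := st_sub_le hadd hubc b
    rwa [add_sub_cancel_left] at this
  have h2 : u - b ≤ a := by
    refine le_trans ?_ hua
    rw [st_sub hadd, show u - (u - b) = b by ring]; exact hb
  have h3 : (u - b) ⊔ 0 ≤ a ⊓ c := le_inf (sup_le h2 ha) (sup_le h1 hc)
  rw [hac] at h3
  have h4 : u ≤ b := by
    have h5 : u - b ≤ 0 := le_trans le_sup_left h3
    have := hadd (u - b) 0 b h5
    rwa [sub_add_cancel, zero_add] at this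
  have h6 : u ≤ a ⊓ b := le_inf hua h4
  rw [hab] at h6
  exact le_antisymm h6 hu0

lemma st_disj_nsmul {a b : E} (hab : a ⊓ b = 0) (n m : ℕ) :
    (n • a) ⊓ (m • b) = 0 := by
  have ha : 0 ≤ a := hab ▸ inf_le_left
  have hb : 0 ≤ b := hab ▸ inf_le_right
  have h1 : ∀ m : ℕ, a ⊓ (m • b) = 0 := by
    intro m
    induction m with
    | zero => rw [zero_smul]; exact inf_eq_right.mpr ha
    | succ m ih => rw [succ_nsmul]; exact st_disj_add hadd (st_nsmul_nonneg hadd hb m) hb ih hab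
  have h2 : ∀ k : ℕ, (m • b) ⊓ (k • a) = 0 := by
    intro k
    induction k with
    | zero => rw [zero_smul]; exact inf_eq_right.mpr (st_nsmul_nonneg hadd hb m)
    | succ k ih => rw [succ_nsmul]; exact st_disj_add hadd (st_nsmul_nonneg hadd ha k) ha ih (by rw [inf_comm]; exact h1 m)
  rw [inf_comm]; exact h2 n

lemma st_nsmul_inf (n : ℕ) (a b : E) : n • (a ⊓ b) = (n • a) ⊓ (n • b) := by
  set d := a ⊓ b with hd
  have h1 : (a - d) ⊓ (b - d) = 0 := by
    rw [sub_eq_add_neg, sub_eq_add_neg, ← st_inf_add hadd, ← hd, add_neg_cancel]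
  have h2 : (n • (a - d)) ⊓ (n • (b - d)) = 0 := st_disj_nsmul hadd h1 n n
  have h3 := st_inf_add hadd (n • (a - d)) (n • (b - d)) (n • d)
  rw [h2, zero_add, smul_sub, smul_sub, sub_add_cancel, sub_add_cancel] at h3
  exact h3

lemma st_glb_aux {D : Set E} (hdir : DirectedOn (· ≥ ·) D) (hglb : IsGLB D 0) :
    ∀ (N : ℕ) (c : E), (∀ v ∈ D, c ≤ N • v) → c ≤ 0 := by
  intro N
  induction N with
  | zero =>
    intro c h
    exact hglb.2 (fun v hv => le_trans (by simpa using h v hv) (hglb.1 hv))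
  | succ N ih =>
    intro c h
    apply hglb.2
    intro v hv
    have hcv : c - v ≤ 0 := by
      apply ih
      intro v' hv'
      obtain ⟨v'', hv''D, hle1, hle2⟩ := hdir v hv v' hv'
      have h1 : c ≤ (N+1) • v'' := h v'' hv''D
      rw [succ_nsmul] at h1
      have h2 : N • v'' + v'' ≤ N • v' + v := st_add_le hadd (st_nsmul_le hadd hle2 N) hle1
      have h3 : c ≤ N • v' + v := le_trans h1 h2
      have := st_sub_le hadd h3 v
      rwa [add_sub_cancel_right] at this
    have := hadd (c - v) 0 v hcv
    rwa [sub_add_cancel, zero_add] at this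

lemma st_glb_key {S : Set E} (hglb : IsGLB S 0) (N : ℕ) {c : E}
    (h : ∀ v ∈ S, c ≤ N • v) : c ≤ 0 := by
  have hnn : ∀ v ∈ S, 0 ≤ v := fun v hv => hglb.1 hv
  have h' : ∀ v ∈ S, c ⊔ 0 ≤ N • v := fun v hv =>
    sup_le (h v hv) (st_nsmul_nonneg hadd (hnn v hv) N)
  set D := {u : E | 0 ≤ u ∧ c ⊔ 0 ≤ N • u ∧ ∃ v ∈ S, u ≤ v} with hD
  have hSD : ∀ v ∈ S, v ∈ D := fun v hv => ⟨hnn v hv, h' v hv, v, hv, le_rfl⟩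
  have hdir : DirectedOn (· ≥ ·) D := by
    rintro u1 ⟨hu1, hc1, v1, hv1, huv1⟩ u2 ⟨hu2, hc2, v2, hv2, huv2⟩
    refine ⟨u1 ⊓ u2, ⟨le_inf hu1 hu2, ?_, v1, hv1, le_trans inf_le_left huv1⟩,
      inf_le_left, inf_le_right⟩
    rw [st_nsmul_inf hadd]
    exact le_inf hc1 hc2
  have hglbD : IsGLB D 0 :=
    ⟨fun u hu => hu.1, fun b hb => hglb.2 (fun v hv => hb (hSD v hv))⟩
  have := st_glb_aux hadd hdir hglbD N (c ⊔ 0) (fun v hv => hv.2.1)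
  exact le_trans le_sup_left this

lemma st_glb_key' {S : Set E} {ι : E} (hglb : IsGLB S ι) (N : ℕ) {c : E}
    (h : ∀ v ∈ S, c ≤ N • v) : c ≤ N • ι := by
  have hglb' : IsGLB ((fun v => v - ι) '' S) 0 := by
    constructor
    · rintro _ ⟨v, hv, rfl⟩
      exact (st_sub hadd ι v).1 (hglb.1 hv)
    · intro b hb
      have h1 : b + ι ≤ ι := hglb.2 (fun v hv => by
        have := hadd b (v - ι) ι (hb ⟨v, hv, rfl⟩)
        rwa [sub_add_cancel] at this)
      have := st_sub_le hadd h1 ι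
      rwa [add_sub_cancel_right, sub_self] at this
  have h' : ∀ u ∈ ((fun v => v - ι) '' S), c - N • ι ≤ N • u := by
    rintro _ ⟨v, hv, rfl⟩
    rw [smul_sub]
    exact st_sub_le hadd (h v hv) (N • ι)
  have := st_glb_key hadd hglb' N h'
  have h2 := hadd (c - N • ι) 0 (N • ι) this
  rwa [sub_add_cancel, zero_add] at h2

end Part2


/-- `T = Ψ(e)` is a weak order unit for the `T`-strong dual `Ê`:
for every `F ∈ Ê₊` and `x ∈ E₊`, `sup_n (F ∧ nT)(x) = F x`, where `(F ∧ nT)(x)`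
is the Riesz–Kantorovich infimum. -/
theorem stmt7 (T : E → E) (L1 : Set E) (hT : IsCondExp T L1)
    (sqrt : E → E) (hsqrt : IsSqrt sqrt)
    (F : E → E) (hF : MemEhat T L1 sqrt F) (hFpos : leF L1 (fun _ => 0) F)
    (x : E) (hx : x ∈ L2 L1) (hx0 : 0 ≤ x)
    (i : ℕ → E)
    (hi : ∀ n : ℕ, IsGLB (RKset L1 F (fun z => n • T z) x) (i n)) :
    IsLUB (Set.range i) (F x) := by

  obtain ⟨hlin, k, hkRT, hk0, hkb⟩ := hF
  have hadd := hT.addLe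
  have hmul := hT.mulPos
  have hfa := hT.fAlg
  have hT0 : T 0 = 0 := by
    have h := hT.addT 0 0
    rw [add_zero] at h
    exact (add_left_cancel (a := T 0) (by rw [← h, add_zero])).symm
  have hTmono : ∀ {a b : E}, a ≤ b → T a ≤ T b := by
    intro a b hab
    have h1 := hT.addT a (b - a)
    rw [show a + (b - a) = b by ring] at h1
    have h2 : 0 ≤ T (b - a) := hT.posT _ ((st_sub hadd a b).1 hab)
    rw [h1]
    have h3 := hadd 0 (T (b - a)) (T a) h2
    rwa [zero_add, add_comm] at h3
  have hTsmul : ∀ (n : ℕ) (a : E), T (n • a) = n • T a := by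
    intro n a
    induction n with
    | zero => simpa using hT0
    | succ n ih => rw [succ_nsmul, succ_nsmul, hT.addT, ih]
  constructor
  · rintro _ ⟨n, rfl⟩
    have h0L1 : (0:E) ∈ L1 := by have := hT.rtL1 0; rwa [hT0] at this
    have h0L2 : (0:E) ∈ L2 L1 := ⟨h0L1, by rw [mul_zero]; exact h0L1⟩
    have hmem : F x ∈ RKset L1 F (fun z => n • T z) x :=
      ⟨x, 0, hx, h0L2, hx0, le_rfl, add_zero x, by simp [hT0]⟩
    exact (hi n).1 hmem
  · intro β hβ
    set pp : ℕ → E := fun j => (x - j • (1:E)) ⊔ 0 with hpp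
    have hone : (0:E) ≤ 1 := by
      have := st_sq_nonneg hadd hmul hfa (1:E)
      rwa [mul_one] at this
    have hppnn : ∀ j, 0 ≤ pp j := fun j => by simp only [hpp]; exact le_sup_right
    have hpple : ∀ j, x - j • (1:E) ≤ pp j := fun j => by simp only [hpp]; exact le_sup_left
    have hppx : ∀ j, pp j ≤ x := by
      intro j
      simp only [hpp]
      refine sup_le ?_ hx0
      rw [st_sub hadd, show x - (x - j • (1:E)) = j • (1:E) by ring]
      exact st_nsmul_nonneg hadd hone j
    have hppanti : ∀ {j j' : ℕ}, j ≤ j' → pp j' ≤ pp j := by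
      intro j j' h
      simp only [hpp]
      refine sup_le ?_ le_sup_right
      refine le_trans ?_ le_sup_left
      rw [st_sub hadd, show (x - j • (1:E)) - (x - j' • (1:E)) = j' • (1:E) - j • (1:E) by ring]
      exact (st_sub hadd _ _).1 (st_nsmul_mono_nat hadd hone h)
    have hxpnn : ∀ j, 0 ≤ x * pp j := fun j => hmul _ _ hx0 (hppnn j)
    have hxpanti : ∀ {j j' : ℕ}, j ≤ j' → x * pp j' ≤ x * pp j :=
      fun h => st_mul_le hadd hmul hx0 (hppanti h)
    have hSglb : IsGLB (Set.range fun j => x * pp j) 0 := by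
      constructor
      · rintro _ ⟨j, rfl⟩; exact hxpnn j
      · intro d hd
        apply st_arch hadd (a := x * (x * x))
        intro m
        have h1 : m • d ≤ m • (x * pp m) := st_nsmul_le hadd (hd ⟨m, rfl⟩) m
        have h3 : m • pp m ≤ x * pp m := by
          have hppm : pp m = (x - m • (1:E)) ⊔ 0 := by simp only [hpp]
          set P : E := (x - m • (1:E)) ⊔ 0 with hPd
          set N : E := (-(x - m • (1:E))) ⊔ 0 with hNd
          have ha : x - m • (1:E) = P - N := eq_sub_of_add_eq (st_pos_eq hadd _).symm
          have hz : P * N = 0 :=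
            st_disj_mul hadd hmul hfa le_sup_right le_sup_right (st_posneg hadd _)
          rw [hppm, st_sub hadd]
          have h4 : (m • (1:E)) * P = m • P := by rw [smul_mul_assoc, one_mul]
          have e1 : x * P - m • P = P * P := by
            calc x * P - m • P = ((x - m • (1:E)) + m • (1:E)) * P - m • P := by
                  rw [sub_add_cancel]
            _ = (x - m • (1:E)) * P + ((m • (1:E)) * P - m • P) := by ring
            _ = (x - m • (1:E)) * P := by rw [h4]; ring
            _ = P * P - P * N := by rw [ha]; ring
            _ = P * P := by rw [hz, sub_zero]
          rw [e1]
          exact hmul P P le_sup_right le_sup_right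
        have h4 : x * (m • pp m) ≤ x * (x * pp m) := st_mul_le hadd hmul hx0 h3
        have h5 : x * (x * pp m) ≤ x * (x * x) :=
          st_mul_le hadd hmul hx0 (st_mul_le hadd hmul hx0 (hppx m))
        calc m • d ≤ m • (x * pp m) := h1
        _ = x * (m • pp m) := (mul_smul_comm m x (pp m)).symm
        _ ≤ x * (x * x) := le_trans h4 h5
    have hSdir : DirectedOn (· ≥ ·) (Set.range fun j => x * pp j) := by
      rintro _ ⟨j, rfl⟩ _ ⟨j', rfl⟩
      exact ⟨x * pp (max j j'), ⟨max j j', rfl⟩, hxpanti (le_max_left _ _),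
        hxpanti (le_max_right _ _)⟩
    have hTglb : IsGLB (T '' (Set.range fun j => x * pp j)) 0 :=
      hT.ordContT _ ⟨_, ⟨0, rfl⟩⟩ hSdir (by rintro _ ⟨j, rfl⟩; exact hxpnn j) hSglb
    have h2pos : (0:E) ≤ 2 := by
      have := st_add0 hadd hone hone
      rwa [one_add_one_eq_two] at this
    have hmain : ∀ p q : ℕ,
        (2*p) • (F x) - ((p*p) • T (x * pp (2*q)) + k*k) ≤ (2*p) • β := by
      intro p q
      have hP : (0:E) ≤ (p:E) := by
        have := st_nsmul_nonneg hadd hone p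
        rwa [nsmul_eq_mul, mul_one] at this
      have hlb : ∀ v ∈ RKset L1 F (fun z => (p*q) • T z) x,
          (2*p) • (F x) - ((p*p) • T (x * pp (2*q)) + k*k) ≤ (2*p) • v := by
        rintro v ⟨y, z, hyL2, hzL2, hy0, hz0, hyz, rfl⟩
        show (2*p) • (F x) - ((p*p) • T (x * pp (2*q)) + k*k)
            ≤ (2*p) • (F y + (p*q) • T z)
        have hFx : F x = F y + F z := by rw [← hyz]; exact hlin.2.1 y hyL2 z hzL2
        have hzx : z ≤ x := by
          rw [st_sub hadd, show x - z = y by rw [← hyz]; ring]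
          exact hy0
        have hzznn : (0:E) ≤ z * z := hmul z z hz0 hz0
        obtain ⟨hs0, hss⟩ := hsqrt (T (z*z)) (hT.posT _ hzznn)
        set s := sqrt (T (z*z)) with hsdef
        have hFzks : F z ≤ k * s := le_trans le_sup_left (hkb z hzL2)
        have hzz_le : z * z ≤ (2*q) • z + x * pp (2*q) := by
          have e1 : z * z ≤ z * x := by
            rw [st_sub hadd, show z*x - z*z = z*(x-z) by ring]
            exact hmul _ _ hz0 ((st_sub hadd _ _).1 hzx)
          have e2 : z * (x - pp (2*q)) ≤ (2*q) • z := by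
            have e3 : x - pp (2*q) ≤ (2*q) • (1:E) := by
              rw [st_sub hadd,
                show (2*q) • (1:E) - (x - pp (2*q)) = pp (2*q) - (x - (2*q) • (1:E)) by ring]
              exact (st_sub hadd _ _).1 (hpple (2*q))
            have := st_mul_le hadd hmul hz0 e3
            rwa [mul_smul_comm, mul_one] at this
          have e4 : z * pp (2*q) ≤ x * pp (2*q) := by
            rw [mul_comm z _, mul_comm x _]
            exact st_mul_le hadd hmul (hppnn (2*q)) hzx
          calc z * z ≤ z * x := e1
          _ = z * (x - pp (2*q)) + z * pp (2*q) := by ring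
          _ ≤ (2*q) • z + x * pp (2*q) := st_add_le hadd e2 e4
        have hA : T (z*z) ≤ (2*q) • T z + T (x * pp (2*q)) := by
          have h := hTmono hzz_le
          rwa [hT.addT, hTsmul] at h
        have hA' : T (z*z) ≤ 2*(q:E) * T z + T (x * pp (2*q)) := by
          rw [nsmul_eq_mul] at hA
          rw [show ((2*q : ℕ) : E) = 2*(q:E) by push_cast; ring] at hA
          exact hA
        have t1 : (0:E) ≤ (2*(p:E)) * (k*s - F z) :=
          hmul _ _ (hmul _ _ h2pos hP) ((st_sub hadd _ _).1 hFzks)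
        have t2 : (0:E) ≤ ((p:E)*s - k) * ((p:E)*s - k) := st_sq_nonneg hadd hmul hfa _
        have t3 : (0:E) ≤ ((p:E)*(p:E)) * (2*(q:E) * T z + T (x * pp (2*q)) - s*s) := by
          refine hmul _ _ (hmul _ _ hP hP) ?_
          rw [hss]
          exact (st_sub hadd _ _).1 hA'
        rw [st_sub hadd]
        rw [show (2*p) • (F y + (p*q) • T z) - ((2*p) • (F x) - ((p*p) • T (x * pp (2*q)) + k*k))
              = (2*(p:E))*(k*s - F z) + ((p:E)*s - k)*((p:E)*s - k)
                + ((p:E)*(p:E))*(2*(q:E) * T z + T (x * pp (2*q)) - s*s) by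
          rw [hFx]; simp only [nsmul_eq_mul]; push_cast; ring]
        exact st_add0 hadd (st_add0 hadd t1 t2) t3
      have h1 := st_glb_key' hadd (hi (p*q)) (2*p) hlb
      exact le_trans h1 (st_nsmul_le hadd (hβ ⟨p*q, rfl⟩) (2*p))
    have hk2 : ∀ p : ℕ, p • (2 • (F x - β)) ≤ k * k := by
      intro p
      have hc : ∀ v ∈ T '' (Set.range fun j => x * pp j),
          (2*p) • (F x) - (2*p) • β - k*k ≤ (p*p) • v := by
        rintro _ ⟨_, ⟨j, rfl⟩, rfl⟩
        have h1 : (2*p) • (F x) - (2*p) • β - k*k ≤ (p*p) • T (x * pp (2*j)) := by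
          have hm := hmain p j
          rw [st_sub hadd] at hm ⊢
          rw [show (p*p) • T (x * pp (2*j)) - ((2*p) • (F x) - (2*p) • β - k*k)
                = (2*p) • β - ((2*p) • (F x) - ((p*p) • T (x * pp (2*j)) + k*k)) by ring]
          exact hm
        refine le_trans h1 (st_nsmul_le hadd (hTmono ?_) (p*p))
        exact hxpanti (by omega)
      have h2 := st_glb_key hadd hTglb (p*p) hc
      rw [st_sub hadd]
      rw [show k*k - p • (2 • (F x - β)) = 0 - ((2*p) • (F x) - (2*p) • β - k*k) by
        simp only [nsmul_eq_mul]; push_cast; ring]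
      exact (st_sub hadd _ _).1 h2
    have h2w : 2 • (F x - β) ≤ 0 := st_arch hadd hk2
    have hwneg : F x - β ≤ -(F x - β) := by
      rw [st_sub hadd,
        show -(F x - β) - (F x - β) = 0 - 2 • (F x - β) by
          simp only [nsmul_eq_mul]; push_cast; ring]
      exact (st_sub hadd _ _).1 h2w
    have hw1 : (F x - β) ⊔ 0 ≤ (-(F x - β)) ⊔ 0 :=
      sup_le (le_trans hwneg le_sup_left) le_sup_right
    have hw2 : (F x - β) ⊔ 0 ≤ 0 := by
      calc (F x - β) ⊔ 0 ≤ ((F x - β) ⊔ 0) ⊓ ((-(F x - β)) ⊔ 0) := le_inf le_rfl hw1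
      _ = 0 := st_posneg hadd _
    have hw3 : F x - β ≤ 0 := le_trans le_sup_left hw2
    have := hadd (F x - β) 0 β hw3
    rwa [sub_add_cancel, zero_add] at this
end
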